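/- arXiv:2412.04693 — 2 statements merged into one kernel-verified Lean document; each statement's English description precedes it below -/
import Mathlib

section
/- Let 1 ≤ κ ≤ N and suppose 0 < K < κ + L_κ · ∑_{j=κ+1}^{N} 1/L_j. Then every maximizer c̃ ∈ D_N(K) of c ↦ 𝒱(c;κ,L) over D_N(K) uses the full sampling budget, i.e., ∑_{i=1}^{N} c̃_i = K. -/
open Finset

/-- The inner minimum `𝒱(c; κ, L)`: the minimum over subsets `U ⊆ {1,…,N}` with `|U| = κ`
of `∑_{i ∈ U} c_i L_i`. -/
noncomputable def Vmin (N κ : ℕ) (L c : ℕ → ℝ) : ℝ :=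
  sInf {x : ℝ | ∃ U : Finset ℕ, U ⊆ Finset.Icc 1 N ∧ U.card = κ ∧ x = ∑ i ∈ U, c i * L i}

/-- Membership in the constraint set `D_N(K) = {c ∈ [0,1]^N : ∑_{i=1}^N c_i ≤ K}`. -/
def Dmem (N : ℕ) (K : ℝ) (c : ℕ → ℝ) : Prop :=
  (∀ i ∈ Finset.Icc 1 N, 0 ≤ c i ∧ c i ≤ 1) ∧ (∑ i ∈ Finset.Icc 1 N, c i) ≤ K

/-- The max–min value `V(κ, K, L) = sup_{c ∈ D_N(K)} 𝒱(c; κ, L)`. -/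
noncomputable def Vval (N κ : ℕ) (K : ℝ) (L : ℕ → ℝ) : ℝ :=
  sSup {v : ℝ | ∃ c : ℕ → ℝ, Dmem N K c ∧ v = Vmin N κ L c}

private lemma Vmin_set_eq (N κ : ℕ) (L c : ℕ → ℝ) :
    {x : ℝ | ∃ U : Finset ℕ, U ⊆ Finset.Icc 1 N ∧ U.card = κ ∧ x = ∑ i ∈ U, c i * L i}
      = ↑((((Finset.Icc 1 N).powerset.filter fun U => U.card = κ)).image
          fun U => ∑ i ∈ U, c i * L i) := by
  ext x
  simp only [Set.mem_setOf_eq, Finset.coe_image, Set.mem_image, Finset.mem_coe,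
    Finset.mem_filter, Finset.mem_powerset]
  constructor
  · rintro ⟨U, h1, h2, rfl⟩; exact ⟨U, ⟨h1, h2⟩, rfl⟩
  · rintro ⟨U, ⟨h1, h2⟩, rfl⟩; exact ⟨U, h1, h2, rfl⟩

lemma Vmin_le (N κ : ℕ) (L c : ℕ → ℝ) (U : Finset ℕ) (hU : U ⊆ Finset.Icc 1 N)
    (hcard : U.card = κ) : Vmin N κ L c ≤ ∑ i ∈ U, c i * L i := by
  apply csInf_le
  · rw [Vmin_set_eq]; exact Finset.bddBelow _
  · exact ⟨U, hU, hcard, rfl⟩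

lemma Vmin_attained (N κ : ℕ) (hκN : κ ≤ N) (L c : ℕ → ℝ) :
    ∃ U : Finset ℕ, U ⊆ Finset.Icc 1 N ∧ U.card = κ ∧
      Vmin N κ L c = ∑ i ∈ U, c i * L i := by
  have hne : {x : ℝ | ∃ U : Finset ℕ, U ⊆ Finset.Icc 1 N ∧ U.card = κ ∧
      x = ∑ i ∈ U, c i * L i}.Nonempty := by
    obtain ⟨U, hU, hcard⟩ := Finset.exists_subset_card_eq
      (s := Finset.Icc 1 N) (n := κ) (by rw [Nat.card_Icc]; omega)
    exact ⟨_, U, hU, hcard, rfl⟩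
  have hfin : {x : ℝ | ∃ U : Finset ℕ, U ⊆ Finset.Icc 1 N ∧ U.card = κ ∧
      x = ∑ i ∈ U, c i * L i}.Finite := by
    rw [Vmin_set_eq]; exact Finset.finite_toSet _
  exact hne.csInf_mem hfin

lemma sum_mono_lower (N : ℕ) (f : ℕ → ℝ)
    (hf : ∀ a b : ℕ, 1 ≤ a → a ≤ b → b ≤ N → f a ≤ f b) :
    ∀ k : ℕ, ∀ A : Finset ℕ, A ⊆ Finset.Icc 1 N → A.card = k →
      ∑ i ∈ Finset.Icc 1 k, f i ≤ ∑ i ∈ A, f i := by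
  intro k
  induction k with
  | zero => intro A hA h0; simp [Finset.card_eq_zero.mp h0]
  | succ k ih =>
    intro A hA hcard
    have hAne : A.Nonempty := Finset.card_pos.mp (by omega)
    set m := A.max' hAne with hm
    have hmA : m ∈ A := A.max'_mem hAne
    have hm1 : 1 ≤ m ∧ m ≤ N := by have := hA hmA; simpa using this
    have hsub : A ⊆ Finset.Icc 1 m := by
      intro a ha
      have h1 := hA ha
      simp only [Finset.mem_Icc] at h1 ⊢
      exact ⟨h1.1, A.le_max' a ha⟩
    have hkm : k + 1 ≤ m := by
      have := Finset.card_le_card hsub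
      rw [hcard, Nat.card_Icc] at this
      omega
    have herase : A.erase m ⊆ Finset.Icc 1 N := (Finset.erase_subset _ _).trans hA
    have hcard' : (A.erase m).card = k := by
      rw [Finset.card_erase_of_mem hmA, hcard]; omega
    have hIH := ih (A.erase m) herase hcard'
    have hstep : f (k + 1) ≤ f m := hf (k + 1) m (by omega) hkm hm1.2
    have hsplit : ∑ i ∈ Finset.Icc 1 (k + 1), f i
        = ∑ i ∈ Finset.Icc 1 k, f i + f (k + 1) := Finset.sum_Icc_succ_top (by omega) f
    have hA' : ∑ i ∈ A.erase m, f i + f m = ∑ i ∈ A, f i := Finset.sum_erase_add A f hmA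
    linarith

/-- if `0 < K < κ + L_κ ∑_{j=κ+1}^N 1/L_j`, then every maximizer `c̃ ∈ D_N(K)`
of `c ↦ 𝒱(c;κ,L)` over `D_N(K)` uses the full sampling budget: `∑_{i=1}^N c̃_i = K`. -/
theorem stmt_4 (N : ℕ) (hN : 1 ≤ N) (L : ℕ → ℝ)
    (hLpos : ∀ i ∈ Finset.Icc 1 N, 0 < L i)
    (hLmono : ∀ i j : ℕ, 1 ≤ i → i ≤ j → j ≤ N → L i ≤ L j)
    (κ : ℕ) (hκ1 : 1 ≤ κ) (hκN : κ ≤ N) (K : ℝ) (hK0 : 0 < K)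
    (hKlt : K < (κ : ℝ) + L κ * ∑ j ∈ Finset.Icc (κ + 1) N, (L j)⁻¹)
    (c : ℕ → ℝ) (hc : Dmem N K c)
    (hmax : ∀ c' : ℕ → ℝ, Dmem N K c' → Vmin N κ L c' ≤ Vmin N κ L c) :
    ∑ i ∈ Finset.Icc 1 N, c i = K := by
  by_contra hne
  have hsum_le : ∑ i ∈ Finset.Icc 1 N, c i ≤ K := hc.2
  have hsum_lt : ∑ i ∈ Finset.Icc 1 N, c i < K := lt_of_le_of_ne hsum_le hne
  have hLκpos : 0 < L κ := hLpos κ (by simp only [Finset.mem_Icc]; omega)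
  -- Step 1: the min value is strictly below ∑_{i=1}^κ L_i
  have hstep1 : Vmin N κ L c < ∑ i ∈ Finset.Icc 1 κ, L i := by
    rcases lt_or_ge (Vmin N κ L c) (∑ i ∈ Finset.Icc 1 κ, L i) with h | h
    · exact h
    exfalso
    have hswap : ∀ j ∈ Finset.Icc (κ + 1) N, L κ ≤ c j * L j := by
      intro j hj
      simp only [Finset.mem_Icc] at hj
      have hjnot : j ∉ Finset.Icc 1 (κ - 1) := by
        simp only [Finset.mem_Icc]; omega
      have hUsub : insert j (Finset.Icc 1 (κ - 1)) ⊆ Finset.Icc 1 N := by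
        intro a ha
        simp only [Finset.mem_insert, Finset.mem_Icc] at ha ⊢
        rcases ha with rfl | ha <;> omega
      have hUcard : (insert j (Finset.Icc 1 (κ - 1))).card = κ := by
        rw [Finset.card_insert_of_notMem hjnot, Nat.card_Icc]; omega
      have h1 := Vmin_le N κ L c _ hUsub hUcard
      rw [Finset.sum_insert hjnot] at h1
      have h2 : ∑ i ∈ Finset.Icc 1 (κ - 1), c i * L i
          ≤ ∑ i ∈ Finset.Icc 1 (κ - 1), L i := by
        apply Finset.sum_le_sum
        intro i hi
        simp only [Finset.mem_Icc] at hi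
        have hLi := hLpos i (by simp only [Finset.mem_Icc]; omega)
        have hci := (hc.1 i (by simp only [Finset.mem_Icc]; omega)).2
        nlinarith
      have h3 : ∑ i ∈ Finset.Icc 1 κ, L i = ∑ i ∈ Finset.Icc 1 (κ - 1), L i + L κ := by
        have hκ : κ = (κ - 1) + 1 := by omega
        calc ∑ i ∈ Finset.Icc 1 κ, L i = ∑ i ∈ Finset.Icc 1 ((κ - 1) + 1), L i := by rw [← hκ]
          _ = ∑ i ∈ Finset.Icc 1 (κ - 1), L i + L ((κ - 1) + 1) :=
              Finset.sum_Icc_succ_top (by omega) L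
          _ = ∑ i ∈ Finset.Icc 1 (κ - 1), L i + L κ := by rw [← hκ]
      linarith
    have hone : ∀ i ∈ Finset.Icc 1 κ, c i = 1 := by
      have hsubκ : Finset.Icc 1 κ ⊆ Finset.Icc 1 N := by
        intro a ha; simp only [Finset.mem_Icc] at ha ⊢; omega
      have hle := Vmin_le N κ L c (Finset.Icc 1 κ) hsubκ (by rw [Nat.card_Icc]; omega)
      by_contra hcon
      push_neg at hcon
      obtain ⟨i0, hi0, hci0⟩ := hcon
      have hlt : ∑ i ∈ Finset.Icc 1 κ, c i * L i < ∑ i ∈ Finset.Icc 1 κ, L i := by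
        apply Finset.sum_lt_sum
        · intro i hi
          simp only [Finset.mem_Icc] at hi
          have hLi := hLpos i (by simp only [Finset.mem_Icc]; omega)
          have hci := (hc.1 i (by simp only [Finset.mem_Icc]; omega)).2
          nlinarith
        · refine ⟨i0, hi0, ?_⟩
          simp only [Finset.mem_Icc] at hi0
          have hLi := hLpos i0 (by simp only [Finset.mem_Icc]; omega)
          have hci := hc.1 i0 (by simp only [Finset.mem_Icc]; omega)
          have : c i0 < 1 := lt_of_le_of_ne hci.2 hci0
          nlinarith
      linarith
    have hsplitN : Finset.Icc 1 N = Finset.Icc 1 κ ∪ Finset.Icc (κ + 1) N := by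
      ext a; simp only [Finset.mem_union, Finset.mem_Icc]; omega
    have hdisj : Disjoint (Finset.Icc 1 κ) (Finset.Icc (κ + 1) N) := by
      rw [Finset.disjoint_left]
      intro a ha hb
      simp only [Finset.mem_Icc] at ha hb
      omega
    have hsum1 : ∑ i ∈ Finset.Icc 1 κ, c i = κ := by
      rw [Finset.sum_congr rfl hone]
      simp [Nat.card_Icc]
    have hsum2 : L κ * ∑ j ∈ Finset.Icc (κ + 1) N, (L j)⁻¹
        ≤ ∑ j ∈ Finset.Icc (κ + 1) N, c j := by
      rw [Finset.mul_sum]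
      apply Finset.sum_le_sum
      intro j hj
      have hjm := hj
      simp only [Finset.mem_Icc] at hjm
      have hLj := hLpos j (by simp only [Finset.mem_Icc]; omega)
      have hsw := hswap j hj
      have h := mul_le_mul_of_nonneg_right hsw (inv_nonneg.mpr hLj.le)
      rwa [mul_assoc, mul_inv_cancel₀ hLj.ne', mul_one] at h
    have hbig : K < ∑ i ∈ Finset.Icc 1 N, c i := by
      rw [hsplitN, Finset.sum_union hdisj, hsum1]
      linarith
    linarith
  -- Step 2: build a strictly better feasible point, contradiction
  set δ := K - ∑ i ∈ Finset.Icc 1 N, c i with hδdef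
  have hδ : 0 < δ := by rw [hδdef]; linarith
  have hNpos : (0 : ℝ) < N := by exact_mod_cast hN
  have hε : 0 < δ / N := div_pos hδ hNpos
  set c' : ℕ → ℝ := fun i => min (c i + δ / N) 1 with hc'def
  have hc'mem : Dmem N K c' := by
    constructor
    · intro i hi
      have hci := hc.1 i hi
      exact ⟨le_min (by linarith) (by norm_num), min_le_right _ _⟩
    · have hNδ : (N : ℝ) * (δ / N) = δ := by field_simp
      calc ∑ i ∈ Finset.Icc 1 N, c' i
          ≤ ∑ i ∈ Finset.Icc 1 N, (c i + δ / N) :=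
            Finset.sum_le_sum fun i _ => min_le_left _ _
        _ = ∑ i ∈ Finset.Icc 1 N, c i + (N : ℝ) * (δ / N) := by
            rw [Finset.sum_add_distrib, Finset.sum_const, Nat.card_Icc,
              Nat.add_sub_cancel, nsmul_eq_mul]
        _ = K := by rw [hNδ, hδdef]; ring
  have hVle := hmax c' hc'mem
  obtain ⟨U0, hU0sub, hU0card, hU0eq⟩ := Vmin_attained N κ hκN L c'
  have hcc' : ∀ i ∈ Finset.Icc 1 N, c i ≤ c' i := by
    intro i hi
    exact le_min (by linarith) (hc.1 i hi).2
  have hge : ∀ i ∈ U0, c i * L i ≤ c' i * L i := by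
    intro i hi
    have hi' := hU0sub hi
    have hLi := hLpos i hi'
    nlinarith [hcc' i hi']
  have h1 : Vmin N κ L c ≤ ∑ i ∈ U0, c i * L i := Vmin_le N κ L c U0 hU0sub hU0card
  have h2 : ∑ i ∈ U0, c i * L i ≤ ∑ i ∈ U0, c' i * L i := Finset.sum_le_sum hge
  have key : ∑ i ∈ U0, c' i * L i ≤ Vmin N κ L c := by rw [← hU0eq]; exact hVle
  have heq : ∑ i ∈ U0, c i * L i = ∑ i ∈ U0, c' i * L i := le_antisymm h2 (by linarith)
  have hVeq : Vmin N κ L c = ∑ i ∈ U0, c i * L i := le_antisymm h1 (by linarith)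
  have hmono := sum_mono_lower N L hLmono κ U0 hU0sub hU0card
  have hlt2 : ∑ i ∈ U0, c i * L i < ∑ i ∈ U0, L i := by
    calc ∑ i ∈ U0, c i * L i = Vmin N κ L c := hVeq.symm
      _ < ∑ i ∈ Finset.Icc 1 κ, L i := hstep1
      _ ≤ ∑ i ∈ U0, L i := hmono
  obtain ⟨i0, hi0U, hi0lt⟩ := Finset.exists_lt_of_sum_lt hlt2
  have hi0' := hU0sub hi0U
  have hL0 := hLpos i0 hi0'
  have hc0 := hc.1 i0 hi0'
  have hc0lt : c i0 < 1 := by nlinarith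
  have hc'0 : c i0 < c' i0 := lt_min (by linarith) hc0lt
  have hstrict : ∑ i ∈ U0, c i * L i < ∑ i ∈ U0, c' i * L i :=
    Finset.sum_lt_sum hge ⟨i0, hi0U, by nlinarith⟩
  linarith
end

section
/- Let L₁ = (L_{1,1} ≤ ⋯ ≤ L_{1,N₁}) and L₂ = (L_{2,1} ≤ ⋯ ≤ L_{2,N₂}) be two lists of positive reals, let κ₁ ∈ {1,…,N₁}, κ₂ ∈ {1,…,N₂}, K > 0 and r > 0. Then there exist K₁*, K₂* ≥ 0 with K₁* + K₂* ≤ K such that W(κ₁,κ₂,K,L₁,L₂,r) = V(κ₁,K₁*,L₁) = r · V(κ₂,K₂*,L₂), and for every pair (K₁,K₂) of nonnegative reals with K₁ + K₂ ≤ K and V(κ₁,K₁,L₁) = r · V(κ₂,K₂,L₂) one has V(κ₁,K₁,L₁) ≤ W(κ₁,κ₂,K,L₁,L₂,r). In other words, the max–min value W equals the value of the constrained maximization of V(κ₁,K₁,L₁) over pairs (K₁,K₂) with K₁+K₂ ≤ K and V(κ₁,K₁,L₁) = r·V(κ₂,K₂,L₂). -/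
open Finset

/-- The max–min value `W(κ₁,κ₂,K,L₁,L₂,r)` of Optimization Problem II. -/
noncomputable def Wval (N₁ N₂ κ₁ κ₂ : ℕ) (K r : ℝ) (L₁ L₂ : ℕ → ℝ) : ℝ :=
  sSup {w : ℝ | ∃ c₁ c₂ : ℕ → ℝ,
    (∀ i ∈ Finset.Icc 1 N₁, 0 ≤ c₁ i ∧ c₁ i ≤ 1) ∧
    (∀ j ∈ Finset.Icc 1 N₂, 0 ≤ c₂ j ∧ c₂ j ≤ 1) ∧
    (∑ i ∈ Finset.Icc 1 N₁, c₁ i) + (∑ j ∈ Finset.Icc 1 N₂, c₂ j) ≤ K ∧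
    w = min (Vmin N₁ κ₁ L₁ c₁) (r * Vmin N₂ κ₂ L₂ c₂)}

/-!
The budget function `t ↦ V(κ, t, L)` is nondecreasing, vanishes at `0` and is Lipschitz
(shrink an allocation `c` for budget `t` to `(s/t) • c`), so by the intermediate value theorem
some split `s + (K - s) = K` balances the two sides: `V(κ₁, s, L₁) = r · V(κ₂, K - s, L₂)`.
An admissible pair with budgets `k₁ + k₂ ≤ K` has `k₁ ≤ s` or `k₂ ≤ K - s`, so `W` is at most
that balanced value; conversely, nearly optimal allocations for budgets `K₁ + K₂ ≤ K` form an
admissible pair, so `W ≥ min (V(κ₁, K₁, L₁)) (r · V(κ₂, K₂, L₂))`.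
-/

section Vval

variable {N κ : ℕ} {L c : ℕ → ℝ} {K : ℝ}

lemma Vmin_nonneg (hL : ∀ i ∈ Icc 1 N, 0 ≤ L i) (hc : ∀ i ∈ Icc 1 N, 0 ≤ c i) :
    0 ≤ Vmin N κ L c :=
  Real.sInf_nonneg <| by
    rintro x ⟨U, hU, -, rfl⟩
    exact sum_nonneg fun i hi => mul_nonneg (hc i (hU hi)) (hL i (hU hi))

lemma Vmin_smul {a : ℝ} (ha : 0 ≤ a) (c : ℕ → ℝ) :
    Vmin N κ L (a • c) = a * Vmin N κ L c := by
  rw [Vmin, Vmin, ← smul_eq_mul, ← Real.sInf_smul_of_nonneg ha]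
  congr 1
  ext x
  simp only [Set.mem_ofPred_eq, Set.mem_smul_set, Pi.smul_apply, smul_eq_mul, mul_assoc]
  constructor
  · rintro ⟨U, hU, hcard, rfl⟩
    exact ⟨_, ⟨U, hU, hcard, rfl⟩, mul_sum _ _ _⟩
  · rintro ⟨_, ⟨U, hU, hcard, rfl⟩, rfl⟩
    exact ⟨U, hU, hcard, mul_sum _ _ _⟩

lemma Vmin_le_mul_sum (hκN : κ ≤ N) (hL : ∀ i ∈ Icc 1 N, 0 ≤ L i)
    (hc : ∀ i ∈ Icc 1 N, 0 ≤ c i) :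
    Vmin N κ L c ≤ (∑ i ∈ Icc 1 N, L i) * ∑ i ∈ Icc 1 N, c i := by
  obtain ⟨U, hU, hcard⟩ := exists_subset_card_eq (s := Icc 1 N) (n := κ) (by simpa using hκN)
  have hbdd : BddBelow
      {x : ℝ | ∃ U : Finset ℕ, U ⊆ Icc 1 N ∧ U.card = κ ∧ x = ∑ i ∈ U, c i * L i} := by
    refine ⟨0, ?_⟩
    rintro x ⟨U, hU, -, rfl⟩
    exact sum_nonneg fun i hi => mul_nonneg (hc i (hU hi)) (hL i (hU hi))
  calc Vmin N κ L c ≤ ∑ i ∈ U, c i * L i := csInf_le hbdd ⟨U, hU, hcard, rfl⟩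
    _ ≤ ∑ i ∈ Icc 1 N, c i * L i :=
      sum_le_sum_of_subset_of_nonneg hU fun i hi _ => mul_nonneg (hc i hi) (hL i hi)
    _ ≤ ∑ i ∈ Icc 1 N, c i * ∑ j ∈ Icc 1 N, L j :=
      sum_le_sum fun i hi => mul_le_mul_of_nonneg_left (single_le_sum hL hi) (hc i hi)
    _ = (∑ i ∈ Icc 1 N, L i) * ∑ i ∈ Icc 1 N, c i := by rw [← sum_mul, mul_comm]

lemma Dmem_zero (hK : 0 ≤ K) : Dmem N K 0 :=
  ⟨fun _ _ => ⟨le_rfl, zero_le_one⟩, by simpa using hK⟩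

lemma Dmem.smul {a : ℝ} (ha₀ : 0 ≤ a) (ha₁ : a ≤ 1) (hc : Dmem N K c) :
    Dmem N (a * K) (a • c) := by
  refine ⟨fun i hi => ?_, ?_⟩
  · obtain ⟨hc₀, hc₁⟩ := hc.1 i hi
    exact ⟨mul_nonneg ha₀ hc₀, mul_le_one₀ ha₁ hc₀ hc₁⟩
  · simpa only [Pi.smul_apply, smul_eq_mul, ← mul_sum] using mul_le_mul_of_nonneg_left hc.2 ha₀

lemma Vmin_le_of_Dmem (hκN : κ ≤ N) (hL : ∀ i ∈ Icc 1 N, 0 ≤ L i) (hc : Dmem N K c) :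
    Vmin N κ L c ≤ (∑ i ∈ Icc 1 N, L i) * K :=
  (Vmin_le_mul_sum hκN hL fun i hi => (hc.1 i hi).1).trans
    (mul_le_mul_of_nonneg_left hc.2 (sum_nonneg hL))

lemma Vmin_le_Vval (hκN : κ ≤ N) (hL : ∀ i ∈ Icc 1 N, 0 ≤ L i) (hc : Dmem N K c) :
    Vmin N κ L c ≤ Vval N κ K L := by
  refine le_csSup ⟨(∑ i ∈ Icc 1 N, L i) * K, ?_⟩ ⟨c, hc, rfl⟩
  rintro _ ⟨c', hc', rfl⟩
  exact Vmin_le_of_Dmem hκN hL hc'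

lemma Vval_le_of_forall {B : ℝ} (hK : 0 ≤ K) (h : ∀ c, Dmem N K c → Vmin N κ L c ≤ B) :
    Vval N κ K L ≤ B := by
  refine csSup_le ⟨_, 0, Dmem_zero hK, rfl⟩ ?_
  rintro _ ⟨c, hc, rfl⟩
  exact h c hc

lemma exists_lt_Vmin_of_lt_Vval {x : ℝ} (hK : 0 ≤ K) (hx : x < Vval N κ K L) :
    ∃ c, Dmem N K c ∧ x < Vmin N κ L c := by
  obtain ⟨_, ⟨c, hc, rfl⟩, hxc⟩ :=
    exists_lt_of_lt_csSup (s := {v | ∃ c, Dmem N K c ∧ v = Vmin N κ L c})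
      ⟨_, 0, Dmem_zero hK, rfl⟩ hx
  exact ⟨c, hc, hxc⟩

lemma Vval_nonneg (hκN : κ ≤ N) (hL : ∀ i ∈ Icc 1 N, 0 ≤ L i) (hK : 0 ≤ K) :
    0 ≤ Vval N κ K L :=
  (Vmin_nonneg hL fun _ _ => le_rfl).trans (Vmin_le_Vval hκN hL (Dmem_zero hK))

lemma Vval_le_mul (hκN : κ ≤ N) (hL : ∀ i ∈ Icc 1 N, 0 ≤ L i) (hK : 0 ≤ K) :
    Vval N κ K L ≤ (∑ i ∈ Icc 1 N, L i) * K :=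
  Vval_le_of_forall hK fun _ => Vmin_le_of_Dmem hκN hL

lemma Vval_zero (hκN : κ ≤ N) (hL : ∀ i ∈ Icc 1 N, 0 ≤ L i) : Vval N κ 0 L = 0 :=
  le_antisymm (by simpa using Vval_le_mul hκN hL le_rfl) (Vval_nonneg hκN hL le_rfl)

lemma Vval_mono (hκN : κ ≤ N) (hL : ∀ i ∈ Icc 1 N, 0 ≤ L i) {K' : ℝ} (hK : 0 ≤ K)
    (hKK' : K ≤ K') : Vval N κ K L ≤ Vval N κ K' L :=
  Vval_le_of_forall hK fun _ hc => Vmin_le_Vval hκN hL ⟨hc.1, hc.2.trans hKK'⟩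

lemma Vval_le_add_mul (hκN : κ ≤ N) (hL : ∀ i ∈ Icc 1 N, 0 ≤ L i) {s t : ℝ} (hs : 0 ≤ s)
    (hst : s ≤ t) : Vval N κ t L ≤ Vval N κ s L + (∑ i ∈ Icc 1 N, L i) * (t - s) := by
  set M := ∑ i ∈ Icc 1 N, L i
  have hVs := Vval_nonneg hκN hL hs
  refine Vval_le_of_forall (hs.trans hst) fun c hc => ?_
  have hct := Vmin_le_of_Dmem hκN hL hc
  rcases (hs.trans hst).eq_or_lt with rfl | ht
  · obtain rfl : s = 0 := le_antisymm hst hs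
    simpa [Vval_zero hκN hL] using hct
  · have ha₁ : s / t ≤ 1 := (div_le_one ht).2 hst
    have hshrink : s / t * Vmin N κ L c ≤ Vval N κ s L := by
      rw [← Vmin_smul (div_nonneg hs ht.le)]
      refine Vmin_le_Vval hκN hL ?_
      simpa [div_mul_cancel₀ s ht.ne'] using hc.smul (div_nonneg hs ht.le) ha₁
    have hrest : (1 - s / t) * Vmin N κ L c ≤ M * (t - s) := by
      calc (1 - s / t) * Vmin N κ L c ≤ (1 - s / t) * (M * t) :=
            mul_le_mul_of_nonneg_left hct (sub_nonneg.2 ha₁)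
        _ = M * (t - s) := by field_simp
    linarith

lemma lipschitzOnWith_Vval (hκN : κ ≤ N) (hL : ∀ i ∈ Icc 1 N, 0 ≤ L i) :
    LipschitzOnWith (∑ i ∈ Icc 1 N, L i).toNNReal (fun t => Vval N κ t L) (Set.Ici 0) := by
  refine LipschitzOnWith.of_le_add_mul' _ fun x hx y hy => ?_
  rcases le_total x y with hxy | hyx
  · have := Vval_mono hκN hL hx hxy
    have := mul_nonneg (sum_nonneg hL) (dist_nonneg (x := x) (y := y))
    linarith
  · rw [Real.dist_eq, abs_of_nonneg (sub_nonneg.2 hyx)]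
    exact Vval_le_add_mul hκN hL hy hyx

end Vval

section Wval

variable {N₁ N₂ κ₁ κ₂ : ℕ} {K r : ℝ} {L₁ L₂ : ℕ → ℝ}

lemma min_Vmin_le_Wval (hκ₁N : κ₁ ≤ N₁) (hL₁ : ∀ i ∈ Icc 1 N₁, 0 ≤ L₁ i) {c₁ c₂ : ℕ → ℝ}
    (hc₁ : ∀ i ∈ Icc 1 N₁, 0 ≤ c₁ i ∧ c₁ i ≤ 1) (hc₂ : ∀ j ∈ Icc 1 N₂, 0 ≤ c₂ j ∧ c₂ j ≤ 1)
    (hsum : ∑ i ∈ Icc 1 N₁, c₁ i + ∑ j ∈ Icc 1 N₂, c₂ j ≤ K) :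
    min (Vmin N₁ κ₁ L₁ c₁) (r * Vmin N₂ κ₂ L₂ c₂) ≤ Wval N₁ N₂ κ₁ κ₂ K r L₁ L₂ := by
  refine le_csSup ⟨(∑ i ∈ Icc 1 N₁, L₁ i) * K, ?_⟩ ⟨c₁, c₂, hc₁, hc₂, hsum, rfl⟩
  rintro _ ⟨c₁', c₂', hc₁', hc₂', hsum', rfl⟩
  have : 0 ≤ ∑ j ∈ Icc 1 N₂, c₂' j := sum_nonneg fun j hj => (hc₂' j hj).1
  exact (min_le_left _ _).trans (Vmin_le_of_Dmem hκ₁N hL₁ ⟨hc₁', by linarith⟩)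

lemma Wval_le_max (hκ₁N : κ₁ ≤ N₁) (hκ₂N : κ₂ ≤ N₂) (hL₁ : ∀ i ∈ Icc 1 N₁, 0 ≤ L₁ i)
    (hL₂ : ∀ i ∈ Icc 1 N₂, 0 ≤ L₂ i) (hK : 0 ≤ K) (hr : 0 ≤ r) (s : ℝ) :
    Wval N₁ N₂ κ₁ κ₂ K r L₁ L₂ ≤ max (Vval N₁ κ₁ s L₁) (r * Vval N₂ κ₂ (K - s) L₂) := by
  refine csSup_le ⟨_, 0, 0, fun _ _ => ⟨le_rfl, zero_le_one⟩, fun _ _ => ⟨le_rfl, zero_le_one⟩,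
    by simpa using hK, rfl⟩ ?_
  rintro _ ⟨c₁, c₂, hc₁, hc₂, hsum, rfl⟩
  have hk₁ : 0 ≤ ∑ i ∈ Icc 1 N₁, c₁ i := sum_nonneg fun i hi => (hc₁ i hi).1
  have hk₂ : 0 ≤ ∑ j ∈ Icc 1 N₂, c₂ j := sum_nonneg fun j hj => (hc₂ j hj).1
  rcases le_total (∑ i ∈ Icc 1 N₁, c₁ i) s with hs | hs
  · refine le_max_of_le_left ((min_le_left _ _).trans ?_)
    exact (Vmin_le_Vval hκ₁N hL₁ ⟨hc₁, le_rfl⟩).trans (Vval_mono hκ₁N hL₁ hk₁ hs)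
  · refine le_max_of_le_right ((min_le_right _ _).trans (mul_le_mul_of_nonneg_left ?_ hr))
    exact (Vmin_le_Vval hκ₂N hL₂ ⟨hc₂, le_rfl⟩).trans (Vval_mono hκ₂N hL₂ hk₂ (by linarith))

lemma min_Vval_le_Wval (hκ₁N : κ₁ ≤ N₁) (hL₁ : ∀ i ∈ Icc 1 N₁, 0 ≤ L₁ i) (hr : 0 < r)
    {K₁ K₂ : ℝ} (hK₁ : 0 ≤ K₁) (hK₂ : 0 ≤ K₂) (hK : K₁ + K₂ ≤ K) :
    min (Vval N₁ κ₁ K₁ L₁) (r * Vval N₂ κ₂ K₂ L₂) ≤ Wval N₁ N₂ κ₁ κ₂ K r L₁ L₂ := by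
  refine le_of_forall_lt fun w hw => ?_
  rw [lt_min_iff, ← div_lt_iff₀' hr] at hw
  obtain ⟨c₁, hc₁, hw₁⟩ := exists_lt_Vmin_of_lt_Vval hK₁ hw.1
  obtain ⟨c₂, hc₂, hw₂⟩ := exists_lt_Vmin_of_lt_Vval hK₂ hw.2
  rw [div_lt_iff₀' hr] at hw₂
  exact (lt_min hw₁ hw₂).trans_le
    (min_Vmin_le_Wval hκ₁N hL₁ hc₁.1 hc₂.1 (by linarith [hc₁.2, hc₂.2]))

lemma exists_Vval_eq_mul_Vval (hκ₁N : κ₁ ≤ N₁) (hκ₂N : κ₂ ≤ N₂)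
    (hL₁ : ∀ i ∈ Icc 1 N₁, 0 ≤ L₁ i) (hL₂ : ∀ i ∈ Icc 1 N₂, 0 ≤ L₂ i) (hK : 0 ≤ K)
    (hr : 0 ≤ r) : ∃ s ∈ Set.Icc 0 K, Vval N₁ κ₁ s L₁ = r * Vval N₂ κ₂ (K - s) L₂ := by
  have hcont : ContinuousOn (fun s => Vval N₁ κ₁ s L₁ - r * Vval N₂ κ₂ (K - s) L₂)
      (Set.Icc 0 K) :=
    ((lipschitzOnWith_Vval hκ₁N hL₁).continuousOn.mono Set.Icc_subset_Ici_self).sub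
      (continuousOn_const.mul ((lipschitzOnWith_Vval hκ₂N hL₂).continuousOn.comp
        (continuousOn_const.sub continuousOn_id) fun s hs => sub_nonneg.2 hs.2))
  have h₀ : Vval N₁ κ₁ 0 L₁ - r * Vval N₂ κ₂ (K - 0) L₂ ≤ 0 := by
    rw [Vval_zero hκ₁N hL₁, zero_sub, neg_nonpos]
    exact mul_nonneg hr (Vval_nonneg hκ₂N hL₂ (by simpa using hK))
  have hK' : 0 ≤ Vval N₁ κ₁ K L₁ - r * Vval N₂ κ₂ (K - K) L₂ := by
    rw [sub_self, Vval_zero hκ₂N hL₂, mul_zero, sub_zero]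
    exact Vval_nonneg hκ₁N hL₁ hK
  obtain ⟨s, hs, hs0⟩ := intermediate_value_Icc hK hcont ⟨h₀, hK'⟩
  exact ⟨s, hs, sub_eq_zero.1 hs0⟩

end Wval

theorem stmt_7_general (N₁ N₂ : ℕ) (L₁ L₂ : ℕ → ℝ)
    (hL₁pos : ∀ i ∈ Finset.Icc 1 N₁, 0 < L₁ i)
    (hL₂pos : ∀ i ∈ Finset.Icc 1 N₂, 0 < L₂ i)
    (κ₁ κ₂ : ℕ) (hκ₁N : κ₁ ≤ N₁) (hκ₂N : κ₂ ≤ N₂)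
    (K r : ℝ) (hK : 0 < K) (hr : 0 < r) :
    (∃ K₁ K₂ : ℝ, 0 ≤ K₁ ∧ 0 ≤ K₂ ∧ K₁ + K₂ ≤ K ∧
      Wval N₁ N₂ κ₁ κ₂ K r L₁ L₂ = Vval N₁ κ₁ K₁ L₁ ∧
      Vval N₁ κ₁ K₁ L₁ = r * Vval N₂ κ₂ K₂ L₂) ∧
    (∀ K₁ K₂ : ℝ, 0 ≤ K₁ → 0 ≤ K₂ → K₁ + K₂ ≤ K →
      Vval N₁ κ₁ K₁ L₁ = r * Vval N₂ κ₂ K₂ L₂ →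
      Vval N₁ κ₁ K₁ L₁ ≤ Wval N₁ N₂ κ₁ κ₂ K r L₁ L₂) := by
  have hL₁ : ∀ i ∈ Icc 1 N₁, 0 ≤ L₁ i := fun i hi => (hL₁pos i hi).le
  have hL₂ : ∀ i ∈ Icc 1 N₂, 0 ≤ L₂ i := fun i hi => (hL₂pos i hi).le
  have hbalanced : ∀ K₁ K₂ : ℝ, 0 ≤ K₁ → 0 ≤ K₂ → K₁ + K₂ ≤ K →
      Vval N₁ κ₁ K₁ L₁ = r * Vval N₂ κ₂ K₂ L₂ →
      Vval N₁ κ₁ K₁ L₁ ≤ Wval N₁ N₂ κ₁ κ₂ K r L₁ L₂ := fun K₁ K₂ hK₁ hK₂ hK₁₂ hV => by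
    have hmin := min_Vval_le_Wval (N₂ := N₂) (L₂ := L₂) (κ₂ := κ₂) hκ₁N hL₁ hr hK₁ hK₂ hK₁₂
    rwa [← hV, min_self] at hmin
  obtain ⟨s, ⟨hs₀, hsK⟩, hs⟩ := exists_Vval_eq_mul_Vval hκ₁N hκ₂N hL₁ hL₂ hK.le hr.le
  have hWs : Wval N₁ N₂ κ₁ κ₂ K r L₁ L₂ ≤ Vval N₁ κ₁ s L₁ := by
    simpa [← hs] using Wval_le_max hκ₁N hκ₂N hL₁ hL₂ hK.le hr.le s
  refine ⟨⟨s, K - s, hs₀, sub_nonneg.2 hsK, by linarith, ?_, hs⟩, hbalanced⟩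
  exact le_antisymm hWs (hbalanced s (K - s) hs₀ (sub_nonneg.2 hsK) (by linarith) hs)

/-- `W(κ₁,κ₂,K,L₁,L₂,r)` equals the value of the constrained maximization of
`V(κ₁,K₁,L₁)` over pairs `(K₁,K₂)` of nonnegative reals with `K₁+K₂ ≤ K` and
`V(κ₁,K₁,L₁) = r·V(κ₂,K₂,L₂)`; in particular the constrained problem is attained at some
`(K₁*,K₂*)` with `W = V(κ₁,K₁*,L₁) = r·V(κ₂,K₂*,L₂)`. -/
theorem stmt_7 (N₁ N₂ : ℕ) (L₁ L₂ : ℕ → ℝ)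
    (hL₁pos : ∀ i ∈ Finset.Icc 1 N₁, 0 < L₁ i)
    (hL₁mono : ∀ i j : ℕ, 1 ≤ i → i ≤ j → j ≤ N₁ → L₁ i ≤ L₁ j)
    (hL₂pos : ∀ i ∈ Finset.Icc 1 N₂, 0 < L₂ i)
    (hL₂mono : ∀ i j : ℕ, 1 ≤ i → i ≤ j → j ≤ N₂ → L₂ i ≤ L₂ j)
    (κ₁ κ₂ : ℕ) (hκ₁1 : 1 ≤ κ₁) (hκ₁N : κ₁ ≤ N₁) (hκ₂1 : 1 ≤ κ₂) (hκ₂N : κ₂ ≤ N₂)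
    (K r : ℝ) (hK : 0 < K) (hr : 0 < r) :
    (∃ K₁ K₂ : ℝ, 0 ≤ K₁ ∧ 0 ≤ K₂ ∧ K₁ + K₂ ≤ K ∧
      Wval N₁ N₂ κ₁ κ₂ K r L₁ L₂ = Vval N₁ κ₁ K₁ L₁ ∧
      Vval N₁ κ₁ K₁ L₁ = r * Vval N₂ κ₂ K₂ L₂) ∧
    (∀ K₁ K₂ : ℝ, 0 ≤ K₁ → 0 ≤ K₂ → K₁ + K₂ ≤ K →
      Vval N₁ κ₁ K₁ L₁ = r * Vval N₂ κ₂ K₂ L₂ →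
      Vval N₁ κ₁ K₁ L₁ ≤ Wval N₁ N₂ κ₁ κ₂ K r L₁ L₂) :=
  stmt_7_general N₁ N₂ L₁ L₂ hL₁pos hL₂pos κ₁ κ₂ hκ₁N hκ₂N K r hK hr
end
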